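/- For every continuous function f : X → ℂ one has S̃ ∘ M̃_f = M̃_{f∘T} ∘ S̃ and S̃* ∘ M̃_f ∘ S̃ = M̃_{L(f)} as bounded operators on ℓ²(X×ℤ), where L(f) = ℒ(1)⁻¹·ℒ(f) is the transfer operator. -/

import Mathlib

open Classical

noncomputable section

/-- `ℓ²(X×ℤ)`: the Hilbert space of square-summable complex families indexed by `X × ℤ`. -/
abbrev l2Z (X : Type*) : Type _ := lp (fun _ : X × ℤ => ℂ) 2

/-- The orthonormal basis vector `e_{(x,n)}` of `ℓ²(X×ℤ)`. -/
def e {X : Type*} (p : X × ℤ) : l2Z X := lp.single 2 p 1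

/-- The normalized transfer operator
`L(f)(x) = ℒ(1)(x)⁻¹ · ∑_{y ∈ T⁻¹({x})} f(y)`, where `ℒ(1)(x) = card (T⁻¹({x}))`. -/
def transferOp {X : Type*} (T : X → X) (f : X → ℂ) (x : X) : ℂ :=
  (Nat.card (T ⁻¹' {x}) : ℂ)⁻¹ * ∑ᶠ y ∈ T ⁻¹' {x}, f y

end

/-!
Fibres of a covering map of a compact space are finite, so `S̃ e_{(x,n)}` is a finite sum and its
coordinates are explicit: `⟪S̃ e_{(z,k)}, e_{(y,m)}⟫ = ℒ(1)(z)^{-1/2}` if `T y = z` and `m = k + 1`,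
and `0` otherwise. Reading off the adjoint gives `S̃* e_{(y,m)} = ℒ(1)(T y)^{-1/2} e_{(T y, m-1)}`,
and both identities are then checked on the basis vectors, which determine bounded operators.
-/

open scoped InnerProductSpace ComplexConjugate

theorem IsCoveringMap.finite_preimage_singleton {E Y : Type*} [TopologicalSpace E]
    [TopologicalSpace Y] [CompactSpace E] [T1Space Y] {f : E → Y} (hf : IsCoveringMap f)
    (y : Y) : (f ⁻¹' {y}).Finite :=
  (isClosed_singleton.preimage hf.continuous).isCompact.finite
    (isDiscrete_iff_discreteTopology.mpr (hf y).1)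

namespace l2Z

variable {X : Type*}

theorem smul_e (p : X × ℤ) (a : ℂ) : a • e p = lp.single 2 p a := by
  rw [e, ← lp.single_smul, smul_eq_mul, mul_one]

theorem e_apply (p q : X × ℤ) : (e p : X × ℤ → ℂ) q = if q = p then 1 else 0 := by
  simp [e, Pi.single_apply]

theorem inner_e_left (p : X × ℤ) (v : l2Z X) : ⟪e p, v⟫_ℂ = (v : X × ℤ → ℂ) p := by
  simp [e, lp.inner_single_left]

theorem continuousLinearMap_ext {A B : l2Z X →L[ℂ] l2Z X} (h : ∀ p, A (e p) = B (e p)) :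
    A = B := by
  refine lp.ext_continuousLinearMap (by norm_num) fun p => ContinuousLinearMap.ext fun a => ?_
  simpa [← smul_e] using congrArg (a • ·) (h p)

theorem adjoint_apply_e_apply (A : l2Z X →L[ℂ] l2Z X) (p q : X × ℤ) :
    (ContinuousLinearMap.adjoint A (e q) : X × ℤ → ℂ) p = conj ((A (e p) : X × ℤ → ℂ) q) := by
  rw [← inner_e_left, ContinuousLinearMap.adjoint_inner_right, ← inner_conj_symm, inner_e_left]

end l2Z

section WeightedShift

open ContinuousLinearMap

variable {X : Type*}

/-- The weight `ℒ(1)(x)^{-1/2}` of the shift `S̃`. -/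
noncomputable def fiberWeight (T : X → X) (x : X) : ℂ := (((√(Nat.card (T ⁻¹' {x})))⁻¹ : ℝ) : ℂ)

def IsFiberShift (T : X → X) (St : l2Z X →L[ℂ] l2Z X) : Prop :=
  ∀ x n, St (e (x, n)) = fiberWeight T x • ∑ᶠ y ∈ T ⁻¹' {x}, e (y, n + 1)

variable {T : X → X}

theorem fiberWeight_mul_self (x : X) :
    fiberWeight T x * fiberWeight T x = (Nat.card (T ⁻¹' {x}) : ℂ)⁻¹ := by
  rw [fiberWeight, ← Complex.ofReal_mul, ← mul_inv, Real.mul_self_sqrt (Nat.cast_nonneg _)]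
  push_cast
  rfl

theorem conj_fiberWeight (x : X) : conj (fiberWeight T x) = fiberWeight T x :=
  Complex.conj_ofReal _

namespace IsFiberShift

variable {St : l2Z X →L[ℂ] l2Z X} (hSt : IsFiberShift T St) (hfin : ∀ x, (T ⁻¹' {x}).Finite)
include hSt hfin

theorem apply_e (x : X) (n : ℤ) :
    St (e (x, n)) = fiberWeight T x • ∑ y ∈ (hfin x).toFinset, e (y, n + 1) := by
  rw [hSt, ← finsum_mem_coe_finset, Set.Finite.coe_toFinset]

theorem apply_e_apply (z y : X) (k m : ℤ) :
    (St (e (z, k)) : X × ℤ → ℂ) (y, m) = if T y = z ∧ m = k + 1 then fiberWeight T z else 0 := by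
  rw [hSt.apply_e hfin, lp.coeFn_smul, lp.coeFn_sum]
  by_cases hm : m = k + 1 <;> simp [l2Z.e_apply, hm, Finset.sum_apply]

theorem adjoint_apply_e (y : X) (m : ℤ) :
    adjoint St (e (y, m)) = fiberWeight T (T y) • e (T y, m - 1) := by
  refine lp.ext (funext fun ⟨z, k⟩ => ?_)
  rw [l2Z.adjoint_apply_e_apply, hSt.apply_e_apply hfin, lp.coeFn_smul, Pi.smul_apply,
    l2Z.e_apply, smul_eq_mul]
  by_cases hz : T y = z
  · subst hz
    by_cases hm : m = k + 1
    · simp [hm, conj_fiberWeight]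
    · simp [hm, show k ≠ m - 1 by omega]
  · simp [hz, Ne.symm hz]

theorem comp_mul_eq_mul_comp {f : X → ℂ} {Mf MfT : l2Z X →L[ℂ] l2Z X}
    (hMf : ∀ p, Mf (e p) = f p.1 • e p) (hMfT : ∀ p, MfT (e p) = f (T p.1) • e p) :
    St ∘L Mf = MfT ∘L St := by
  refine l2Z.continuousLinearMap_ext fun ⟨x, n⟩ => ?_
  have hfiber : ∀ y ∈ (hfin x).toFinset, MfT (e (y, n + 1)) = f x • e (y, n + 1) := by
    intro y hy
    rw [hMfT, (hfin x).mem_toFinset.mp hy]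
  rw [comp_apply, comp_apply, hMf, map_smul, hSt.apply_e hfin, map_smul, map_sum,
    Finset.sum_congr rfl hfiber, ← Finset.smul_sum, smul_comm]

theorem adjoint_comp_mul_comp {f : X → ℂ} {Mf ML : l2Z X →L[ℂ] l2Z X}
    (hMf : ∀ p, Mf (e p) = f p.1 • e p) (hML : ∀ p, ML (e p) = transferOp T f p.1 • e p) :
    adjoint St ∘L Mf ∘L St = ML := by
  refine l2Z.continuousLinearMap_ext fun ⟨x, n⟩ => ?_
  have hfiber : ∀ y ∈ (hfin x).toFinset,
      adjoint St (Mf (e (y, n + 1))) = (fiberWeight T x * f y) • e (x, n) := by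
    intro y hy
    rw [hMf, map_smul, hSt.adjoint_apply_e hfin, (hfin x).mem_toFinset.mp hy,
      add_sub_cancel_right, smul_smul, mul_comm]
  rw [comp_apply, comp_apply, hSt.apply_e hfin, map_smul, map_smul, map_sum, map_sum,
    Finset.sum_congr rfl hfiber, ← Finset.sum_smul, smul_smul, hML, transferOp,
    ← fiberWeight_mul_self, finsum_mem_eq_finite_toFinset_sum f (hfin x)]
  simp only [Finset.mul_sum, mul_assoc]

end IsFiberShift

end WeightedShift

open ContinuousLinearMap in
theorem covariance_and_transfer_tilde_general {X : Type*} [TopologicalSpace X] [CompactSpace X]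
    [T2Space X] (T : X → X) (hT : IsCoveringMap T)
    (St : l2Z X →L[ℂ] l2Z X)
    (hSt : ∀ (x : X) (n : ℤ), St (e (x, n)) =
      (((Real.sqrt (Nat.card (T ⁻¹' {x})))⁻¹ : ℝ) : ℂ) • ∑ᶠ y ∈ T ⁻¹' {x}, e (y, n + 1)) :
    ∀ f : C(X, ℂ), ∀ Mf MfT ML : l2Z X →L[ℂ] l2Z X,
      (∀ p : X × ℤ, Mf (e p) = f p.1 • e p) →
      (∀ p : X × ℤ, MfT (e p) = f (T p.1) • e p) →
      (∀ p : X × ℤ, ML (e p) = transferOp T f p.1 • e p) →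
      St ∘L Mf = MfT ∘L St ∧ (adjoint St) ∘L Mf ∘L St = ML := by
  intro f Mf MfT ML hMf hMfT hML
  have hShift : IsFiberShift T St := hSt
  have hfin := hT.finite_preimage_singleton
  exact ⟨hShift.comp_mul_eq_mul_comp hfin hMf hMfT, hShift.adjoint_comp_mul_comp hfin hMf hML⟩

open ContinuousLinearMap in
/-- Let `X` be a compact Hausdorff space, `T : X → X` a covering map and
`S̃` the bounded operator on `ℓ²(X×ℤ)` with
`S̃ e_{(x,n)} = (ℒ(1)(x))^{-1/2} ∑_{y ∈ T⁻¹({x})} e_{(y,n+1)}`. For every continuous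
`f : X → ℂ` one has `S̃ ∘ M̃_f = M̃_{f∘T} ∘ S̃` and `S̃* ∘ M̃_f ∘ S̃ = M̃_{L(f)}`, where
`L(f) = ℒ(1)⁻¹·ℒ(f)` is the transfer operator and `M̃_g` denotes the (unique) bounded
operator with `M̃_g e_{(x,n)} = g(x) e_{(x,n)}`. -/
theorem covariance_and_transfer_tilde {X : Type*} [TopologicalSpace X] [CompactSpace X]
    [T2Space X] (T : X → X) (hT : IsCoveringMap T) (hTsurj : Function.Surjective T)
    (St : l2Z X →L[ℂ] l2Z X)
    (hSt : ∀ (x : X) (n : ℤ), St (e (x, n)) =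
      (((Real.sqrt (Nat.card (T ⁻¹' {x})))⁻¹ : ℝ) : ℂ) • ∑ᶠ y ∈ T ⁻¹' {x}, e (y, n + 1)) :
    ∀ f : C(X, ℂ), ∀ Mf MfT ML : l2Z X →L[ℂ] l2Z X,
      (∀ p : X × ℤ, Mf (e p) = f p.1 • e p) →
      (∀ p : X × ℤ, MfT (e p) = f (T p.1) • e p) →
      (∀ p : X × ℤ, ML (e p) = transferOp T f p.1 • e p) →
      St ∘L Mf = MfT ∘L St ∧ (adjoint St) ∘L Mf ∘L St = ML :=
  covariance_and_transfer_tilde_general T hT St hSt
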